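/- arXiv:2501.00653 — 2 statements merged into one kernel-verified Lean document; each statement's English description precedes it below -/
import Mathlib

section
/- Let n ≥ 2 and 1 ≤ k ≤ n−1, and let u¹,…,uᵐ ∈ ℝⁿ (unit vectors) together with weights λ₁,…,λₘ > 0 form a John decomposition. Let v¹,…,vᵏ ∈ ℝⁿ be orthonormal with linear span F, let c ∈ F and α₁,…,α_k > 0, and let E be the k-ellipsoid with axis directions v¹,…,vᵏ, center c and semi-axes α₁,…,α_k. If the orthogonal projection of uᵢ onto F lies in E for every i ∈ {1,…,m}, then ∏ⱼ αⱼ ≥ (k/n)^{k/2}, with equality if and only if c = 0 and αⱼ = √(k/n) for every j ∈ {1,…,k}. -/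
open scoped InnerProductSpace BigOperators

/-!
Write `γⱼ = ⟪vⱼ, c⟫`. The projection of `uᵢ` lies in the ellipsoid iff
`∑ⱼ (⟪vⱼ, uᵢ⟫ - γⱼ)² / αⱼ² ≤ 1`. Multiplying by `λᵢ` and summing over `i`, the John identities
`∑ᵢ λᵢ ⟪x, uᵢ⟫² = ‖x‖²`, `∑ᵢ λᵢ ⟪x, uᵢ⟫ = 0` and `∑ᵢ λᵢ = n` turn this into
`∑ⱼ αⱼ⁻² + n ∑ⱼ γⱼ² / αⱼ² ≤ n`. AM-GM for the numbers `αⱼ⁻²` then gives `∏ⱼ αⱼ⁻² ≤ (n / k)ᵏ`;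
equality forces all `αⱼ⁻²` to equal `n / k` and the centre term to vanish.
-/

namespace Real

variable {ι : Type*} [Fintype ι]

theorem sq_prod_eq_inv_prod_inv_sq (α : ι → ℝ) : (∏ j, α j) ^ 2 = (∏ j, (α j ^ 2)⁻¹)⁻¹ := by
  rw [Finset.prod_inv_distrib, inv_inv, Finset.prod_pow]

variable [Nonempty ι] {β : ι → ℝ}

theorem prod_le_sum_div_card_pow (hβ : ∀ j, 0 ≤ β j) :
    ∏ j, β j ≤ ((∑ j, β j) / Fintype.card ι) ^ Fintype.card ι := by
  set K := Fintype.card ι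
  have hK : K ≠ 0 := Fintype.card_ne_zero
  have hP : 0 ≤ ∏ j, β j := Finset.prod_nonneg fun j _ => hβ j
  have hamgm := geom_mean_le_arith_mean_weighted Finset.univ (fun _ => (K : ℝ)⁻¹) β
    (fun _ _ => by positivity) (by simp [K, hK]) (fun j _ => hβ j)
  rw [finsetProd_rpow _ _ (fun j _ => hβ j), ← Finset.mul_sum, inv_mul_eq_div] at hamgm
  calc ∏ j, β j = ((∏ j, β j) ^ (K : ℝ)⁻¹) ^ K := (rpow_inv_natCast_pow hP hK).symm
    _ ≤ _ := by gcongr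

theorem eq_sum_div_card_of_prod_eq (hβ : ∀ j, 0 ≤ β j)
    (h : ∏ j, β j = ((∑ j, β j) / Fintype.card ι) ^ Fintype.card ι) (j : ι) :
    β j = (∑ j, β j) / Fintype.card ι := by
  set K := Fintype.card ι
  have hK : K ≠ 0 := Fintype.card_ne_zero
  have hmean : ∑ j, (K : ℝ)⁻¹ * β j = (∑ j, β j) / K := by
    rw [← Finset.mul_sum, inv_mul_eq_div]
  have hgeom : ∏ j, β j ^ (K : ℝ)⁻¹ = (∑ j, β j) / K := by
    rw [finsetProd_rpow _ _ (fun j _ => hβ j), h,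
      pow_rpow_inv_natCast (div_nonneg (Finset.sum_nonneg fun j _ => hβ j) (by positivity)) hK]
  have := (geom_mean_eq_arith_mean_weighted_iff_of_pos' Finset.univ (fun _ => (K : ℝ)⁻¹) β
    (fun _ _ => by positivity) (by simp [K, hK]) (fun j _ => hβ j)).mp
    (hgeom.trans hmean.symm) j (Finset.mem_univ j)
  rwa [hmean] at this

theorem sq_sqrt_div_pow {a b : ℝ} (n : ℕ) (h : 0 ≤ a / b) :
    (√(a / b) ^ n) ^ 2 = ((b / a) ^ n)⁻¹ := by
  rw [← pow_mul, mul_comm, pow_mul, sq_sqrt h, ← inv_pow, inv_div]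

variable {α : ι → ℝ} {N : ℝ}

theorem sqrt_div_pow_le_prod (hα : ∀ j, 0 < α j) (h : ∑ j, (α j ^ 2)⁻¹ ≤ N) :
    √(Fintype.card ι / N) ^ Fintype.card ι ≤ ∏ j, α j := by
  have hN : 0 < N :=
    (Finset.sum_pos (fun j _ => inv_pos.2 (pow_pos (hα j) 2)) Finset.univ_nonempty).trans_le h
  rw [← pow_le_pow_iff_left₀ (by positivity) (Finset.prod_nonneg fun j _ => (hα j).le)
    two_ne_zero, sq_sqrt_div_pow _ (by positivity), sq_prod_eq_inv_prod_inv_sq α]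
  refine inv_anti₀ (Finset.prod_pos fun j _ => inv_pos.2 (pow_pos (hα j) 2)) ?_
  exact (prod_le_sum_div_card_pow fun j => by positivity).trans (by gcongr)

theorem eq_sqrt_div_of_prod_eq (hα : ∀ j, 0 < α j) (h : ∑ j, (α j ^ 2)⁻¹ ≤ N)
    (heq : ∏ j, α j = √(Fintype.card ι / N) ^ Fintype.card ι) :
    ∑ j, (α j ^ 2)⁻¹ = N ∧ ∀ j, α j = √(Fintype.card ι / N) := by
  set K := Fintype.card ι
  have hN : 0 < N :=
    (Finset.sum_pos (fun j _ => inv_pos.2 (pow_pos (hα j) 2)) Finset.univ_nonempty).trans_le h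
  have hprod : ∏ j, (α j ^ 2)⁻¹ = (N / K) ^ K := by
    rw [← inv_inj, ← sq_prod_eq_inv_prod_inv_sq α, heq, sq_sqrt_div_pow _ (by positivity)]
  have hsum : ∑ j, (α j ^ 2)⁻¹ = N := by
    refine h.antisymm ?_
    have := hprod ▸ prod_le_sum_div_card_pow (β := fun j => (α j ^ 2)⁻¹) fun j => by positivity
    rw [pow_le_pow_iff_left₀ (by positivity) (by positivity) Fintype.card_ne_zero] at this
    exact (div_le_div_iff_of_pos_right (by positivity)).mp this
  refine ⟨hsum, fun j => ?_⟩
  have hβ := eq_sum_div_card_of_prod_eq (fun j => by positivity) (hsum ▸ hprod) j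
  rw [hsum, ← inv_div, inv_inj] at hβ
  rw [← hβ, sqrt_sq (hα j).le]

end Real

section JohnDecomposition

variable {E : Type*} [NormedAddCommGroup E] [InnerProductSpace ℝ E]
  {ι : Type*} [Fintype ι] {u : ι → E} {lam : ι → ℝ}

theorem sum_mul_inner_sq_eq_norm_sq
    (hdecomp : ∀ x, ∑ i, (lam i * ⟪u i, x⟫_ℝ) • u i = x) (x : E) :
    ∑ i, lam i * ⟪x, u i⟫_ℝ ^ 2 = ‖x‖ ^ 2 := by
  have h := congrArg (⟪·, x⟫_ℝ) (hdecomp x)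
  simp only [sum_inner, real_inner_smul_left, real_inner_self_eq_norm_sq] at h
  simp only [← h, real_inner_comm x, sq, mul_assoc]

theorem sum_weights_eq_finrank [FiniteDimensional ℝ E]
    (hu : ∀ i, ‖u i‖ = 1) (hdecomp : ∀ x, ∑ i, (lam i * ⟪u i, x⟫_ℝ) • u i = x) :
    ∑ i, lam i = Module.finrank ℝ E := by
  let b := stdOrthonormalBasis ℝ E
  calc ∑ i, lam i = ∑ i, lam i * ∑ l, ⟪b l, u i⟫_ℝ ^ 2 := by
        simp [b.sum_sq_inner_right, hu]
    _ = ∑ l, ‖b l‖ ^ 2 := by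
        simp only [Finset.mul_sum, ← sum_mul_inner_sq_eq_norm_sq hdecomp]
        exact Finset.sum_comm
    _ = Module.finrank ℝ E := by simp [b.orthonormal.1]

theorem sum_mul_inner_sub_sq_eq
    (hsum : ∑ i, lam i • u i = 0) (hdecomp : ∀ x, ∑ i, (lam i * ⟪u i, x⟫_ℝ) • u i = x)
    (x : E) (γ : ℝ) :
    ∑ i, lam i * (⟪x, u i⟫_ℝ - γ) ^ 2 = ‖x‖ ^ 2 + (∑ i, lam i) * γ ^ 2 := by
  have hmean : ∑ i, lam i * ⟪x, u i⟫_ℝ = 0 := by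
    simpa [inner_sum, real_inner_smul_right, mul_comm] using congrArg (⟪x, ·⟫_ℝ) hsum
  calc ∑ i, lam i * (⟪x, u i⟫_ℝ - γ) ^ 2
      = ∑ i, lam i * ⟪x, u i⟫_ℝ ^ 2 - 2 * γ * ∑ i, lam i * ⟪x, u i⟫_ℝ
          + (∑ i, lam i) * γ ^ 2 := by
        simp only [Finset.mul_sum, Finset.sum_mul, ← Finset.sum_sub_distrib,
          ← Finset.sum_add_distrib]
        exact Finset.sum_congr rfl fun i _ => by ring
    _ = _ := by rw [sum_mul_inner_sq_eq_norm_sq hdecomp, hmean]; ring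

theorem sum_inv_sq_add_le_of_forall_sum_sq_div_le_one (hlam : ∀ i, 0 ≤ lam i)
    (hsum : ∑ i, lam i • u i = 0) (hdecomp : ∀ x, ∑ i, (lam i * ⟪u i, x⟫_ℝ) • u i = x)
    {κ : Type*} [Fintype κ] {v : κ → E} (hv : ∀ j, ‖v j‖ = 1) (γ α : κ → ℝ)
    (h : ∀ i, ∑ j, (⟪v j, u i⟫_ℝ - γ j) ^ 2 / α j ^ 2 ≤ 1) :
    ∑ j, (α j ^ 2)⁻¹ + (∑ i, lam i) * ∑ j, γ j ^ 2 / α j ^ 2 ≤ ∑ i, lam i := by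
  calc ∑ j, (α j ^ 2)⁻¹ + (∑ i, lam i) * ∑ j, γ j ^ 2 / α j ^ 2
      = ∑ j, (∑ i, lam i * (⟪v j, u i⟫_ℝ - γ j) ^ 2) / α j ^ 2 := by
        simp only [sum_mul_inner_sub_sq_eq hsum hdecomp, hv, Finset.mul_sum,
          ← Finset.sum_add_distrib]
        exact Finset.sum_congr rfl fun j _ => by ring
    _ = ∑ i, lam i * ∑ j, (⟪v j, u i⟫_ℝ - γ j) ^ 2 / α j ^ 2 := by
        simp only [Finset.sum_div, Finset.mul_sum, mul_div_assoc]
        exact Finset.sum_comm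
    _ ≤ ∑ i, lam i * 1 := Finset.sum_le_sum fun i _ => mul_le_mul_of_nonneg_left (h i) (hlam i)
    _ = ∑ i, lam i := by simp

end JohnDecomposition

namespace Orthonormal

variable {E : Type*} [NormedAddCommGroup E] [InnerProductSpace ℝ E]
  {κ : Type*} [Fintype κ] {v : κ → E}

theorem sum_sq_div_le_one_of_eq_add_sum (hv : Orthonormal ℝ v) {x c : E} {t α : κ → ℝ}
    (ht : ∑ j, t j ^ 2 / α j ^ 2 ≤ 1) (hx : x = c + ∑ j, t j • v j) :
    ∑ j, (⟪v j, x⟫_ℝ - ⟪v j, c⟫_ℝ) ^ 2 / α j ^ 2 ≤ 1 := by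
  simpa [hx, inner_add_right, hv.inner_right_fintype] using ht

theorem eq_zero_of_mem_span_of_inner_eq_zero (hv : Orthonormal ℝ v) {c : E}
    (hc : c ∈ Submodule.span ℝ (Set.range v)) (h : ∀ j, ⟪v j, c⟫_ℝ = 0) : c = 0 := by
  obtain ⟨g, rfl⟩ := (Submodule.mem_span_range_iff_exists_fun ℝ).mp hc
  have hg : g = 0 := funext fun j => (hv.inner_right_fintype g j).symm.trans (h j)
  simp [hg]

end Orthonormal

theorem stmt1_general (n k : ℕ) (hk : 1 ≤ k)
    (m : ℕ) (u : Fin m → EuclideanSpace ℝ (Fin n)) (lam : Fin m → ℝ)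
    (hu : ∀ i, ‖u i‖ = 1) (hlam : ∀ i, 0 < lam i)
    (hsum : ∑ i, lam i • u i = 0)
    (hdecomp : ∀ x : EuclideanSpace ℝ (Fin n), ∑ i, (lam i * ⟪u i, x⟫_ℝ) • u i = x)
    (v : Fin k → EuclideanSpace ℝ (Fin n)) (hv : Orthonormal ℝ v)
    (c : EuclideanSpace ℝ (Fin n)) (hc : c ∈ Submodule.span ℝ (Set.range v))
    (α : Fin k → ℝ) (hα : ∀ j, 0 < α j)
    (Eell : Set (EuclideanSpace ℝ (Fin n)))
    (hEell : Eell = {x | ∃ t : Fin k → ℝ,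
      ∑ j, (t j) ^ 2 / (α j) ^ 2 ≤ 1 ∧ x = c + ∑ j, t j • v j})
    (hproj : ∀ i, (∑ j, ⟪v j, u i⟫_ℝ • v j) ∈ Eell) :
    Real.sqrt ((k : ℝ) / n) ^ k ≤ ∏ j, α j ∧
      ((∏ j, α j = Real.sqrt ((k : ℝ) / n) ^ k) ↔
        (c = 0 ∧ ∀ j, α j = Real.sqrt ((k : ℝ) / n))) := by
  have : Nonempty (Fin k) := ⟨⟨0, hk⟩⟩
  have hweights : ∑ i, lam i = n := by
    simpa using sum_weights_eq_finrank hu hdecomp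
  have hcontain : ∀ i, ∑ j, (⟪v j, u i⟫_ℝ - ⟪v j, c⟫_ℝ) ^ 2 / α j ^ 2 ≤ 1 := fun i => by
    obtain ⟨t, ht, hx⟩ := hEell ▸ hproj i
    simpa [hv.inner_right_fintype] using hv.sum_sq_div_le_one_of_eq_add_sum ht hx
  have hkey := sum_inv_sq_add_le_of_forall_sum_sq_div_le_one (fun i => (hlam i).le) hsum hdecomp
    hv.1 (fun j => ⟪v j, c⟫_ℝ) α hcontain
  rw [hweights] at hkey
  have hcenter : 0 ≤ (n : ℝ) * ∑ j, ⟪v j, c⟫_ℝ ^ 2 / α j ^ 2 := by positivity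
  have hinv : ∑ j, (α j ^ 2)⁻¹ ≤ n := by linarith
  refine ⟨by simpa using Real.sqrt_div_pow_le_prod hα hinv, fun heq => ?_, ?_⟩
  · obtain ⟨hS, hαeq⟩ := Real.eq_sqrt_div_of_prod_eq hα hinv (by simpa using heq)
    have hn0 : (0 : ℝ) < n :=
      hS ▸ Finset.sum_pos (fun j _ => inv_pos.2 (pow_pos (hα j) 2)) Finset.univ_nonempty
    have hzero : ∑ j, ⟪v j, c⟫_ℝ ^ 2 / α j ^ 2 = 0 :=
      le_antisymm (nonpos_of_mul_nonpos_right (by linarith) hn0) (by positivity)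
    refine ⟨hv.eq_zero_of_mem_span_of_inner_eq_zero hc fun j => ?_, by simpa using hαeq⟩
    have hj := (Finset.sum_eq_zero_iff_of_nonneg fun j _ => by positivity).mp hzero j
      (Finset.mem_univ j)
    simpa [(hα j).ne'] using hj
  · rintro ⟨-, hα'⟩
    rw [Finset.prod_congr rfl fun j _ => hα' j, Finset.prod_const, Finset.card_fin]

/-- Lemma on minimal ellipsoids containing projections of a John
decomposition. -/
theorem stmt1 (n k : ℕ) (hn : 2 ≤ n) (hk : 1 ≤ k) (hkn : k ≤ n - 1)
    (m : ℕ) (u : Fin m → EuclideanSpace ℝ (Fin n)) (lam : Fin m → ℝ)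
    (hu : ∀ i, ‖u i‖ = 1) (hlam : ∀ i, 0 < lam i)
    (hsum : ∑ i, lam i • u i = 0)
    (hdecomp : ∀ x : EuclideanSpace ℝ (Fin n), ∑ i, (lam i * ⟪u i, x⟫_ℝ) • u i = x)
    (v : Fin k → EuclideanSpace ℝ (Fin n)) (hv : Orthonormal ℝ v)
    (c : EuclideanSpace ℝ (Fin n)) (hc : c ∈ Submodule.span ℝ (Set.range v))
    (α : Fin k → ℝ) (hα : ∀ j, 0 < α j)
    (Eell : Set (EuclideanSpace ℝ (Fin n)))
    (hEell : Eell = {x | ∃ t : Fin k → ℝ,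
      ∑ j, (t j) ^ 2 / (α j) ^ 2 ≤ 1 ∧ x = c + ∑ j, t j • v j})
    (hproj : ∀ i, (∑ j, ⟪v j, u i⟫_ℝ • v j) ∈ Eell) :
    Real.sqrt ((k : ℝ) / n) ^ k ≤ ∏ j, α j ∧
      ((∏ j, α j = Real.sqrt ((k : ℝ) / n) ^ k) ↔
        (c = 0 ∧ ∀ j, α j = Real.sqrt ((k : ℝ) / n))) :=
  stmt1_general n k hk m u lam hu hlam hsum hdecomp v hv c hc α hα Eell hEell hproj
end

section
/- Let u¹,…,uᵐ ∈ ℝⁿ (unit vectors) with weights λ₁,…,λₘ > 0 form a John decomposition, and let x, y ∈ ℝⁿ satisfy ⟨x,uᵢ⟩ ≤ 1 and ⟨y,uᵢ⟩ ≤ 1 for every i ∈ {1,…,m}. Then ⟨x,y⟩ ≥ −n, with equality if and only if for every i ∈ {1,…,m} one has ⟨x,uᵢ⟩ = 1 or ⟨y,uᵢ⟩ = 1. -/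
open scoped InnerProductSpace BigOperators

/-!
Expanding `⟪x, y⟫` in the John decomposition gives `⟪x, y⟫ = ∑ λᵢ ⟪x, uᵢ⟫ ⟪y, uᵢ⟫`; together with
`∑ λᵢ uᵢ = 0` and `∑ λᵢ = n` (take traces in `∑ λᵢ uᵢ ⊗ uᵢ = id`) this yields
`n + ⟪x, y⟫ = ∑ λᵢ (1 - ⟪x, uᵢ⟫)(1 - ⟪y, uᵢ⟫)`, a sum of nonnegative terms, which vanishes
exactly when every term does.
-/

section ResolutionOfIdentity

variable {ι E : Type*} [Fintype ι] [NormedAddCommGroup E] [InnerProductSpace ℝ E]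
  {u : ι → E} {lam : ι → ℝ}

theorem inner_eq_sum_mul_inner_mul_inner
    (hdecomp : ∀ z : E, ∑ i, (lam i * ⟪u i, z⟫_ℝ) • u i = z) (x y : E) :
    ⟪x, y⟫_ℝ = ∑ i, lam i * (⟪x, u i⟫_ℝ * ⟪y, u i⟫_ℝ) := by
  conv_lhs => rw [← hdecomp y]
  simp only [inner_sum, real_inner_smul_right, real_inner_comm y]
  exact Finset.sum_congr rfl fun i _ => by ring

theorem sum_mul_norm_sq_eq_finrank [FiniteDimensional ℝ E]
    (hdecomp : ∀ z : E, ∑ i, (lam i * ⟪u i, z⟫_ℝ) • u i = z) :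
    ∑ i, lam i * ‖u i‖ ^ 2 = Module.finrank ℝ E := by
  let b := stdOrthonormalBasis ℝ E
  calc ∑ i, lam i * ‖u i‖ ^ 2 = ∑ i, lam i * ∑ j, ⟪b j, u i⟫_ℝ ^ 2 := by
        simp only [b.sum_sq_inner_right]
    _ = ∑ j, ∑ i, lam i * (⟪b j, u i⟫_ℝ * ⟪b j, u i⟫_ℝ) := by
        simp only [Finset.mul_sum, sq]
        exact Finset.sum_comm
    _ = ∑ j, ⟪b j, b j⟫_ℝ := by
        simp only [← inner_eq_sum_mul_inner_mul_inner hdecomp]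
    _ = Module.finrank ℝ E := by
        simp [b.orthonormal.1]

theorem sum_mul_inner_eq_zero (hsum : ∑ i, lam i • u i = 0) (x : E) :
    ∑ i, lam i * ⟪x, u i⟫_ℝ = 0 := by
  simpa only [inner_sum, real_inner_smul_right, inner_zero_right] using
    congrArg (fun z => ⟪x, z⟫_ℝ) hsum

theorem sum_mul_one_sub_inner_mul_one_sub_inner [FiniteDimensional ℝ E]
    (hu : ∀ i, ‖u i‖ = 1) (hsum : ∑ i, lam i • u i = 0)
    (hdecomp : ∀ z : E, ∑ i, (lam i * ⟪u i, z⟫_ℝ) • u i = z) (x y : E) :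
    ∑ i, lam i * ((1 - ⟪x, u i⟫_ℝ) * (1 - ⟪y, u i⟫_ℝ)) = Module.finrank ℝ E + ⟪x, y⟫_ℝ := by
  have hlam : ∑ i, lam i = Module.finrank ℝ E := by
    simpa [hu] using sum_mul_norm_sq_eq_finrank hdecomp
  rw [inner_eq_sum_mul_inner_mul_inner hdecomp, ← hlam]
  have hx := sum_mul_inner_eq_zero hsum x
  have hy := sum_mul_inner_eq_zero hsum y
  calc ∑ i, lam i * ((1 - ⟪x, u i⟫_ℝ) * (1 - ⟪y, u i⟫_ℝ))
      = ∑ i, (lam i - lam i * ⟪x, u i⟫_ℝ - lam i * ⟪y, u i⟫_ℝ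
          + lam i * (⟪x, u i⟫_ℝ * ⟪y, u i⟫_ℝ)) :=
        Finset.sum_congr rfl fun i _ => by ring
    _ = _ := by
        simp only [Finset.sum_add_distrib, Finset.sum_sub_distrib, hx, hy, sub_zero]

end ResolutionOfIdentity

/-- inner products of points below the supporting hyperplanes of a
John decomposition are at least `-n`, with equality characterization. -/
theorem stmt13 (n m : ℕ)
    (u : Fin m → EuclideanSpace ℝ (Fin n)) (lam : Fin m → ℝ)
    (hu : ∀ i, ‖u i‖ = 1) (hlam : ∀ i, 0 < lam i)
    (hsum : ∑ i, lam i • u i = 0)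
    (hdecomp : ∀ z : EuclideanSpace ℝ (Fin n), ∑ i, (lam i * ⟪u i, z⟫_ℝ) • u i = z)
    (x y : EuclideanSpace ℝ (Fin n))
    (hx : ∀ i, ⟪x, u i⟫_ℝ ≤ 1) (hy : ∀ i, ⟪y, u i⟫_ℝ ≤ 1) :
    -(n : ℝ) ≤ ⟪x, y⟫_ℝ ∧
    (⟪x, y⟫_ℝ = -(n : ℝ) ↔ ∀ i, ⟪x, u i⟫_ℝ = 1 ∨ ⟪y, u i⟫_ℝ = 1) := by
  have key := sum_mul_one_sub_inner_mul_one_sub_inner hu hsum hdecomp x y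
  rw [finrank_euclideanSpace_fin] at key
  have hterm : ∀ i ∈ Finset.univ, 0 ≤ lam i * ((1 - ⟪x, u i⟫_ℝ) * (1 - ⟪y, u i⟫_ℝ)) :=
    fun i _ => mul_nonneg (hlam i).le (mul_nonneg (by linarith [hx i]) (by linarith [hy i]))
  have hnonneg := key ▸ Finset.sum_nonneg hterm
  refine ⟨by linarith, ?_⟩
  calc ⟪x, y⟫_ℝ = -(n : ℝ)
      ↔ ∑ i, lam i * ((1 - ⟪x, u i⟫_ℝ) * (1 - ⟪y, u i⟫_ℝ)) = 0 := by
        rw [key]; constructor <;> intro h <;> linarith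
    _ ↔ ∀ i, ⟪x, u i⟫_ℝ = 1 ∨ ⟪y, u i⟫_ℝ = 1 := by
        simp [Finset.sum_eq_zero_iff_of_nonneg hterm, (hlam _).ne', sub_eq_zero, eq_comm (a := (1 : ℝ))]
end
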